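/- Define the nonlinear map P_x (x ∈ ℝ, x ≠ 1) on bipartite states by (I⊗P_x)ρ = (I⊗Γ_{1/x})(I⊗Γ_x)ρ, where (I⊗Γ_y)ρ = √({ρ[I⊗(Tr_A ρ)^{y-1}]}{h.c.}). If ρ^{AB} has a product eigenbasis, then (I⊗P_x)ρ^{AB} = ρ^{AB}. -/

import Mathlib

open Matrix Kronecker
open scoped ComplexOrder

noncomputable section


/-- Real power of a positive semidefinite Hermitian matrix via functional calculus, with the
convention `0 ^ y := 0`; non-Hermitian matrices are mapped to the junk value `0`. -/
def matRPow {n : Type*} [Fintype n] [DecidableEq n] (A : Matrix n n ℂ) (y : ℝ) :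
    Matrix n n ℂ :=
  if hA : A.IsHermitian then
    (hA.eigenvectorUnitary.1 : Matrix n n ℂ) *
      Matrix.diagonal (fun i =>
        ((if hA.eigenvalues i = 0 then 0 else (hA.eigenvalues i) ^ y : ℝ) : ℂ)) *
      (star hA.eigenvectorUnitary.1 : Matrix n n ℂ)
  else 0

/-- The partial trace over the first subsystem. -/
def ptrA {nA nB : Type*} [Fintype nA] (ρ : Matrix (nA × nB) (nA × nB) ℂ) : Matrix nB nB ℂ :=
  fun b b' => ∑ a, ρ (a, b) (a, b')

/-- The square root of a positive semidefinite matrix, as defined in Mathlib of December 2024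
(removed since). -/
def Matrix.PosSemidef.sqrt {n : Type*} [Fintype n] [DecidableEq n] {𝕜 : Type*} [RCLike 𝕜]
    {A : Matrix n n 𝕜} (hA : A.PosSemidef) : Matrix n n 𝕜 :=
  hA.1.eigenvectorUnitary.1 * diagonal ((↑) ∘ (√·) ∘ hA.1.eigenvalues) *
    (star hA.1.eigenvectorUnitary : Matrix n n 𝕜)

/-- The map `(I⊗Γ_x)(ρ) = √({ρ[I ⊗ (Tr_A ρ)^{x-1}]}{h.c.})` (positive square root). -/
def Gamma {nA nB : Type*} [Fintype nA] [Fintype nB] [DecidableEq nA] [DecidableEq nB]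
    (x : ℝ) (ρ : Matrix (nA × nB) (nA × nB) ℂ) : Matrix (nA × nB) (nA × nB) ℂ :=
  (Matrix.posSemidef_self_mul_conjTranspose
    (ρ * ((1 : Matrix nA nA ℂ) ⊗ₖ matRPow (ptrA ρ) (x - 1)))).sqrt

/-- A family of vectors is orthonormal. -/
def OrthonormalFam {κ ι : Type*} [Fintype ι] [DecidableEq κ] (v : κ → ι → ℂ) : Prop :=
  ∀ j k, ∑ i, star (v j i) * v k i = if j = k then 1 else 0

/-- The rank-one projector `|v⟩⟨v|`. -/
def proj {n : Type*} (v : n → ℂ) : Matrix n n ℂ := fun i j => v i * star (v j)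

/-- A bipartite matrix on `ℂ^{dA} ⊗ ℂ^{dB}` has a product eigenbasis if it can be written as
`Σ_{i,j} c_{ij} |u_i⟩⟨u_i| ⊗ |v_j⟩⟨v_j|` for orthonormal bases of the local spaces. -/
def HasProductEigenbasis {dA dB : ℕ}
    (ρ : Matrix ((Fin dA) × (Fin dB)) ((Fin dA) × (Fin dB)) ℂ) : Prop :=
  ∃ (u : Fin dA → Fin dA → ℂ) (v : Fin dB → Fin dB → ℂ) (c : Fin dA → Fin dB → ℝ),
    OrthonormalFam u ∧ OrthonormalFam v ∧
    ρ = ∑ i, ∑ j, ((c i j : ℝ) : ℂ) • (proj (u i) ⊗ₖ proj (v j))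


section Aux
open Polynomial


variable {n : Type*} [Fintype n] [DecidableEq n]

lemma aux_pow_conj (U M : Matrix n n ℂ) (hU : U ∈ Matrix.unitaryGroup n ℂ) (k : ℕ) :
    (U * M * star U) ^ k = U * M ^ k * star U := by
  have h1 : U * star U = 1 := Matrix.mem_unitaryGroup_iff.mp hU
  have h2 : star U * U = 1 := Matrix.mem_unitaryGroup_iff'.mp hU
  induction k with
  | zero => simp [h1]
  | succ k ih =>
      rw [pow_succ, ih, pow_succ]
      simp only [mul_assoc]
      rw [show star U * (U * (M * star U)) = M * star U by
        rw [← mul_assoc, h2, one_mul]]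

lemma aux_aeval_conj (U M : Matrix n n ℂ) (hU : U ∈ Matrix.unitaryGroup n ℂ) (p : ℂ[X]) :
    aeval (U * M * star U) p = U * aeval M p * star U := by
  induction p using Polynomial.induction_on' with
  | add p q hp hq => simp [map_add, hp, hq, Matrix.mul_add, Matrix.add_mul]
  | monomial k a =>
      simp [aeval_monomial, aux_pow_conj U M hU k, Algebra.algebraMap_eq_smul_one,
        smul_mul_assoc, one_mul, mul_smul_comm]

lemma aux_aeval_diagonal (d : n → ℂ) (p : ℂ[X]) :
    aeval (Matrix.diagonal d) p = Matrix.diagonal (fun i => p.eval (d i)) := by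
  induction p using Polynomial.induction_on' with
  | add p q hp hq => simp [map_add, hp, hq, Matrix.diagonal_add]
  | monomial k a =>
      simp only [aeval_monomial, Matrix.diagonal_pow, eval_monomial]
      rw [Algebra.algebraMap_eq_smul_one, smul_mul_assoc, one_mul, ← Matrix.diagonal_smul]
      congr 1

lemma aux_conj_diag_eq (U V : Matrix n n ℂ) (hU : U ∈ Matrix.unitaryGroup n ℂ)
    (hV : V ∈ Matrix.unitaryGroup n ℂ) (d e : n → ℂ)
    (h : U * Matrix.diagonal d * star U = V * Matrix.diagonal e * star V) (g : ℂ → ℂ) :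
    U * Matrix.diagonal (fun i => g (d i)) * star U
      = V * Matrix.diagonal (fun i => g (e i)) * star V := by
  classical
  set t : Finset ℂ := (Finset.univ.image d) ∪ (Finset.univ.image e) with ht
  set p : ℂ[X] := Lagrange.interpolate t id g with hp
  have hpd : ∀ i, p.eval (d i) = g (d i) := fun i => by
    rw [hp]
    exact Lagrange.eval_interpolate_at_node g (Set.injOn_id _)
      (by simp [ht])
  have hpe : ∀ i, p.eval (e i) = g (e i) := fun i => by
    rw [hp]
    exact Lagrange.eval_interpolate_at_node g (Set.injOn_id _)
      (by simp [ht])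
  have key : ∀ (W : Matrix n n ℂ) (f : n → ℂ), W ∈ Matrix.unitaryGroup n ℂ →
      aeval (W * Matrix.diagonal f * star W) p
        = W * Matrix.diagonal (fun i => p.eval (f i)) * star W := by
    intro W f hW
    rw [aux_aeval_conj _ _ hW, aux_aeval_diagonal]
  have := (key U d hU).symm.trans (by rw [h, key V e hV])
  simpa only [funext hpd, funext hpe] using this

lemma Matrix.PosSemidef.eq_sqrt_of_sq_eq {A B : Matrix n n ℂ} (hA : A.PosSemidef)
    (hB : B.PosSemidef) (hAB : A ^ 2 = B) : A = hB.sqrt := by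
  have hAs : A = (hA.1.eigenvectorUnitary.1 : Matrix n n ℂ) *
      Matrix.diagonal (RCLike.ofReal ∘ hA.1.eigenvalues) *
      star (hA.1.eigenvectorUnitary.1 : Matrix n n ℂ) := hA.1.spectral_theorem
  have hBs : B = (hB.1.eigenvectorUnitary.1 : Matrix n n ℂ) *
      Matrix.diagonal (RCLike.ofReal ∘ hB.1.eigenvalues) *
      star (hB.1.eigenvectorUnitary.1 : Matrix n n ℂ) := hB.1.spectral_theorem
  have h2 := congrArg (fun M => M ^ 2) hAs
  rw [aux_pow_conj _ _ hA.1.eigenvectorUnitary.2, Matrix.diagonal_pow, hAB] at h2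
  have key := aux_conj_diag_eq _ _ hA.1.eigenvectorUnitary.2 hB.1.eigenvectorUnitary.2 _ _
    (h2.symm.trans hBs) (fun z => ((Real.sqrt z.re : ℝ) : ℂ))
  calc A = _ := hAs
    _ = _ := by
      congr 3
      funext i
      simp [← Complex.ofReal_pow, Real.sqrt_sq (hA.eigenvalues_nonneg i)]
    _ = _ := key
    _ = hB.sqrt := rfl


variable {d : ℕ}

/-- matrix whose columns are the vectors `v j` -/
def colMat (v : Fin d → Fin d → ℂ) : Matrix (Fin d) (Fin d) ℂ := Matrix.of fun a j => v j a

lemma colMat_unitary {v : Fin d → Fin d → ℂ} (hv : OrthonormalFam v) :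
    colMat v ∈ Matrix.unitaryGroup (Fin d) ℂ := by
  rw [Matrix.mem_unitaryGroup_iff']
  ext j k
  simp only [Matrix.mul_apply, Matrix.star_apply, colMat, Matrix.of_apply, Matrix.one_apply]
  simpa using hv j k

lemma conj_diag_colMat (v : Fin d → Fin d → ℂ) (s : Fin d → ℂ) :
    colMat v * Matrix.diagonal s * star (colMat v) = ∑ j, s j • proj (v j) := by
  ext a b
  simp only [Matrix.mul_apply, Matrix.star_apply, colMat, Matrix.of_apply, Matrix.sum_apply,
    Matrix.smul_apply, proj, smul_eq_mul, Matrix.diagonal_apply, ite_mul, zero_mul, mul_ite,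
    mul_zero, Finset.sum_ite_eq, Finset.sum_ite_eq', Finset.mem_univ, if_true]
  exact Finset.sum_congr rfl fun x _ => by ring

lemma matRPow_sum_proj {v : Fin d → Fin d → ℂ} (hv : OrthonormalFam v) (s : Fin d → ℝ)
    (y : ℝ) :
    matRPow (∑ j, ((s j : ℝ) : ℂ) • proj (v j)) y
      = ∑ j, (((if s j = 0 then 0 else s j ^ y : ℝ)) : ℂ) • proj (v j) := by
  set A : Matrix (Fin d) (Fin d) ℂ := ∑ j, ((s j : ℝ) : ℂ) • proj (v j) with hA'
  have hrep : colMat v * Matrix.diagonal (fun j => ((s j : ℝ) : ℂ)) * star (colMat v) = A :=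
    conj_diag_colMat v _
  have hdiagherm : (Matrix.diagonal (fun j => ((s j : ℝ) : ℂ))).IsHermitian := by
    exact Matrix.isHermitian_diagonal_of_self_adjoint _
      (funext fun j => Complex.conj_ofReal (s j))
  have hherm : A.IsHermitian := by
    rw [← hrep]
    exact Matrix.isHermitian_mul_mul_conjTranspose _ hdiagherm
  rw [matRPow, dif_pos hherm]
  have hspec := hherm.spectral_theorem
  set g : ℂ → ℂ := fun z => if z = 0 then 0 else ((z.re ^ y : ℝ) : ℂ) with hg
  have key := aux_conj_diag_eq (hherm.eigenvectorUnitary.1 : Matrix (Fin d) (Fin d) ℂ)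
      (colMat v) hherm.eigenvectorUnitary.2 (colMat_unitary hv)
      ((RCLike.ofReal ∘ hherm.eigenvalues : Fin d → ℂ)) (fun j => ((s j : ℝ) : ℂ))
      (by rw [hrep]; exact hspec.symm) g
  have hco : ∀ t : ℝ, g ((t : ℝ) : ℂ) = (((if t = 0 then 0 else t ^ y : ℝ)) : ℂ) := by
    intro t
    rw [hg]
    simp only [Complex.ofReal_eq_zero, Complex.ofReal_re]
    split <;> simp
  have h1 : (fun i => (((if hherm.eigenvalues i = 0 then 0 else hherm.eigenvalues i ^ y : ℝ)) : ℂ))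
      = fun i => g ((RCLike.ofReal ∘ hherm.eigenvalues : Fin d → ℂ) i) := by
    funext i
    exact (hco (hherm.eigenvalues i)).symm
  rw [h1, key]
  rw [show (fun j => g ((s j : ℝ) : ℂ)) = fun j => (((if s j = 0 then 0 else s j ^ y : ℝ)) : ℂ)
    from funext fun j => hco (s j)]
  exact conj_diag_colMat v _

section Smat

variable {dA dB : ℕ}

lemma proj_mul_proj {ι κ : Type*} [Fintype ι] [DecidableEq κ] {v : κ → ι → ℂ}
    (hv : OrthonormalFam v) (j k : κ) :
    proj (v j) * proj (v k) = if j = k then proj (v j) else 0 := by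
  ext a b
  have h1 : (proj (v j) * proj (v k)) a b
      = (v j a * star (v k b)) * ∑ m, star (v j m) * v k m := by
    rw [Matrix.mul_apply, Finset.mul_sum]
    exact Finset.sum_congr rfl fun m _ => by simp [proj]; ring
  rw [h1, hv j k]
  by_cases h : j = k
  · subst h; simp [proj]
  · simp [h]

lemma proj_conjTranspose {ι : Type*} (w : ι → ℂ) : (proj w)ᴴ = proj w := by
  ext a b
  simp [proj, Matrix.conjTranspose_apply, mul_comm]

lemma proj_mulVec {ι : Type*} [Fintype ι] (w x : ι → ℂ) :
    proj w *ᵥ x = (star w ⬝ᵥ x) • w := by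
  funext a
  simp only [Matrix.mulVec, dotProduct, proj, Pi.smul_apply, smul_eq_mul,
    Finset.sum_mul, Finset.mul_sum]
  exact Finset.sum_congr rfl fun b _ => by simp [Pi.star_apply]; ring

lemma proj_posSemidef {ι : Type*} [Fintype ι] (w : ι → ℂ) : (proj w).PosSemidef := by
  refine .of_dotProduct_mulVec_nonneg (proj_conjTranspose w) fun x => ?_
  rw [proj_mulVec, dotProduct_smul]
  rw [Matrix.star_dotProduct]
  rw [smul_eq_mul, mul_comm]
  exact mul_star_self_nonneg _

lemma smul_posSemidef {ι : Type*} [Fintype ι] {A : Matrix ι ι ℂ} (hA : A.PosSemidef)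
    {r : ℝ} (hr : 0 ≤ r) : (((r : ℝ) : ℂ) • A).PosSemidef := by
  refine .of_dotProduct_mulVec_nonneg ?_ fun x => ?_
  · show (((r : ℝ) : ℂ) • A)ᴴ = ((r : ℝ) : ℂ) • A
    rw [Matrix.conjTranspose_smul, hA.1]
    congr 1
    simp
  · rw [Matrix.smul_mulVec, dotProduct_smul, smul_eq_mul]
    exact mul_nonneg (by exact_mod_cast Complex.zero_le_real.mpr hr) (hA.dotProduct_mulVec_nonneg x)

lemma posSemidef_sum {ι κ : Type*} [Fintype ι] (s : Finset κ) (f : κ → Matrix ι ι ℂ)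
    (h : ∀ k ∈ s, (f k).PosSemidef) : (∑ k ∈ s, f k).PosSemidef := by
  classical
  induction s using Finset.cons_induction with
  | empty => simpa using Matrix.PosSemidef.zero
  | cons a s ha ih =>
      rw [Finset.sum_cons]
      exact (h a (by simp)).add (ih fun k hk => h k (by simp [hk]))

lemma proj_trace {ι κ : Type*} [Fintype ι] [DecidableEq κ] {v : κ → ι → ℂ}
    (hv : OrthonormalFam v) (j : κ) : ∑ a, proj (v j) a a = 1 := by
  have h := hv j j
  simp only [if_true, eq_self_iff_true] at h
  rw [← h]
  exact Finset.sum_congr rfl fun a _ => by simp [proj]; ring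

lemma kron_proj (u' : Fin dA → ℂ) (v' : Fin dB → ℂ) :
    proj u' ⊗ₖ proj v' = proj (fun p : Fin dA × Fin dB => u' p.1 * v' p.2) := by
  ext p q
  simp [proj, Matrix.kroneckerMap_apply]
  ring

/-- the standard sum-of-product-projectors matrix -/
def Smat (u : Fin dA → Fin dA → ℂ) (v : Fin dB → Fin dB → ℂ) (c : Fin dA → Fin dB → ℝ) :
    Matrix (Fin dA × Fin dB) (Fin dA × Fin dB) ℂ :=
  ∑ i, ∑ j, ((c i j : ℝ) : ℂ) • (proj (u i) ⊗ₖ proj (v j))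

variable {u : Fin dA → Fin dA → ℂ} {v : Fin dB → Fin dB → ℂ}

lemma Smat_posSemidef (c : Fin dA → Fin dB → ℝ) (hc : ∀ i j, 0 ≤ c i j) :
    (Smat u v c).PosSemidef := by
  unfold Smat
  apply _root_.posSemidef_sum
  intro i _
  apply _root_.posSemidef_sum
  intro j _
  rw [kron_proj]
  exact smul_posSemidef (proj_posSemidef _) (hc i j)

lemma Smat_conjTranspose (c : Fin dA → Fin dB → ℝ) : (Smat u v c)ᴴ = Smat u v c := by
  unfold Smat
  rw [Matrix.conjTranspose_sum]
  refine Finset.sum_congr rfl fun i _ => ?_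
  rw [Matrix.conjTranspose_sum]
  refine Finset.sum_congr rfl fun j _ => ?_
  rw [kron_proj, Matrix.conjTranspose_smul, proj_conjTranspose]
  congr 1
  simp [Complex.conj_ofReal]

lemma Smat_hermitian (c : Fin dA → Fin dB → ℝ) : (Smat u v c).IsHermitian :=
  Smat_conjTranspose c

lemma ptrA_Smat (hu : OrthonormalFam u) (c : Fin dA → Fin dB → ℝ) :
    ptrA (Smat u v c) = ∑ j, (((∑ i, c i j : ℝ)) : ℂ) • proj (v j) := by
  ext b b'
  show ∑ a, (∑ i, ∑ j, ((c i j : ℝ) : ℂ) • (proj (u i) ⊗ₖ proj (v j))) (a, b) (a, b') = _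
  simp only [Matrix.sum_apply, Matrix.smul_apply, Matrix.kroneckerMap_apply, smul_eq_mul]
  rw [Finset.sum_comm]
  have key : ∀ i, ∑ a, ∑ j, ((c i j : ℝ) : ℂ) * (proj (u i) a a * proj (v j) b b')
      = ∑ j, ((c i j : ℝ) : ℂ) * proj (v j) b b' := by
    intro i
    rw [Finset.sum_comm]
    refine Finset.sum_congr rfl fun j _ => ?_
    have : ∑ a, ((c i j : ℝ) : ℂ) * (proj (u i) a a * proj (v j) b b')
        = (((c i j : ℝ) : ℂ) * proj (v j) b b') * ∑ a, proj (u i) a a := by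
      rw [Finset.mul_sum]
      exact Finset.sum_congr rfl fun a _ => by ring
    rw [this, proj_trace hu i, mul_one]
  rw [Finset.sum_congr rfl fun i _ => key i, Finset.sum_comm]
  refine Finset.sum_congr rfl fun j _ => ?_
  push_cast
  rw [Finset.sum_mul]

lemma sum_mulVec' {ι κ : Type*} [Fintype ι] [Fintype κ] (f : κ → Matrix ι ι ℂ) (x : ι → ℂ) :
    (∑ k, f k) *ᵥ x = ∑ k, f k *ᵥ x := by
  funext a
  simp only [Matrix.mulVec, dotProduct, Finset.sum_apply, Matrix.sum_apply,
    Finset.sum_mul]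
  exact Finset.sum_comm

lemma proj_mul_sum (hv : OrthonormalFam v) (t : Fin dB → ℝ) (j : Fin dB) :
    proj (v j) * (∑ k, ((t k : ℝ) : ℂ) • proj (v k)) = ((t j : ℝ) : ℂ) • proj (v j) := by
  rw [Finset.mul_sum]
  have h : ∀ k, proj (v j) * (((t k : ℝ) : ℂ) • proj (v k))
      = ((t k : ℝ) : ℂ) • (if j = k then proj (v j) else 0) := by
    intro k
    rw [mul_smul_comm, proj_mul_proj hv]
  rw [Finset.sum_congr rfl fun k _ => h k]
  simp [smul_ite, Finset.sum_ite_eq]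

lemma Smat_mul_kron (hv : OrthonormalFam v) (c : Fin dA → Fin dB → ℝ) (t : Fin dB → ℝ) :
    Smat u v c * ((1 : Matrix (Fin dA) (Fin dA) ℂ) ⊗ₖ (∑ k, ((t k : ℝ) : ℂ) • proj (v k)))
      = Smat u v (fun i j => c i j * t j) := by
  conv_rhs => rw [Smat]
  rw [Smat, Finset.sum_mul]
  refine Finset.sum_congr rfl fun i _ => ?_
  rw [Finset.sum_mul]
  refine Finset.sum_congr rfl fun j _ => ?_
  rw [smul_mul_assoc, ← Matrix.mul_kronecker_mul, Matrix.mul_one, proj_mul_sum hv,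
    Matrix.kronecker_smul, smul_smul, ← Complex.ofReal_mul]

lemma projkron_mul_Smat (hu : OrthonormalFam u) (hv : OrthonormalFam v)
    (d : Fin dA → Fin dB → ℝ) (i : Fin dA) (j : Fin dB) :
    (proj (u i) ⊗ₖ proj (v j)) * Smat u v d
      = ((d i j : ℝ) : ℂ) • (proj (u i) ⊗ₖ proj (v j)) := by
  rw [Smat, Finset.mul_sum]
  have h1 : ∀ k, (proj (u i) ⊗ₖ proj (v j)) * (∑ l, ((d k l : ℝ) : ℂ) • (proj (u k) ⊗ₖ proj (v l)))
      = if i = k then ((d k j : ℝ) : ℂ) • (proj (u i) ⊗ₖ proj (v j)) else 0 := by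
    intro k
    rw [Finset.mul_sum]
    have h2 : ∀ l, (proj (u i) ⊗ₖ proj (v j)) * (((d k l : ℝ) : ℂ) • (proj (u k) ⊗ₖ proj (v l)))
        = ((d k l : ℝ) : ℂ) •
            (if i = k then (if j = l then proj (u i) ⊗ₖ proj (v j) else 0) else 0) := by
      intro l
      rw [mul_smul_comm, ← Matrix.mul_kronecker_mul, proj_mul_proj hu, proj_mul_proj hv]
      congr 1
      by_cases hik : i = k
      · by_cases hjl : j = l <;> simp [hik, hjl]
      · simp [hik]
    rw [Finset.sum_congr rfl fun l _ => h2 l]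
    by_cases hik : i = k
    · simp only [if_pos hik, smul_ite, smul_zero, Finset.sum_ite_eq, Finset.mem_univ, if_true]
    · simp [hik]
  rw [Finset.sum_congr rfl fun k _ => h1 k]
  simp [Finset.sum_ite_eq]

lemma Smat_mul_Smat (hu : OrthonormalFam u) (hv : OrthonormalFam v)
    (c d : Fin dA → Fin dB → ℝ) :
    Smat u v c * Smat u v d = Smat u v (fun i j => c i j * d i j) := by
  have h : Smat u v c * Smat u v d
      = ∑ i, ∑ j, ((c i j : ℝ) : ℂ) • ((proj (u i) ⊗ₖ proj (v j)) * Smat u v d) := by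
    rw [Smat, Finset.sum_mul]
    refine Finset.sum_congr rfl fun i _ => ?_
    rw [Finset.sum_mul]
    exact Finset.sum_congr rfl fun j _ => smul_mul_assoc _ _ _
  rw [h]
  conv_rhs => rw [Smat]
  refine Finset.sum_congr rfl fun i _ => Finset.sum_congr rfl fun j _ => ?_
  rw [projkron_mul_Smat hu hv, smul_smul, ← Complex.ofReal_mul]

lemma Smat_coeff_nonneg (hu : OrthonormalFam u) (hv : OrthonormalFam v)
    (c : Fin dA → Fin dB → ℝ) (h : (Smat u v c).PosSemidef) (i : Fin dA) (j : Fin dB) :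
    0 ≤ c i j := by
  classical
  set w : Fin dA × Fin dB → ℂ := fun p => u i p.1 * v j p.2 with hw
  have hip : ∀ k l, dotProduct (star (fun p : Fin dA × Fin dB => u k p.1 * v l p.2)) w
      = if k = i then (if l = j then 1 else 0) else 0 := by
    intro k l
    have e1 : dotProduct (star (fun p : Fin dA × Fin dB => u k p.1 * v l p.2)) w
        = (∑ a, star (u k a) * u i a) * (∑ b, star (v l b) * v j b) := by
      rw [dotProduct, Fintype.sum_prod_type, Finset.sum_mul_sum]
      refine Finset.sum_congr rfl fun a _ => Finset.sum_congr rfl fun b _ => ?_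
      simp only [Pi.star_apply, hw, star_mul']
      ring
    rw [e1, hu k i, hv l j]
    by_cases h1 : k = i <;> by_cases h2 : l = j <;> simp [h1, h2]
  have hmv : Smat u v c *ᵥ w = ((c i j : ℝ) : ℂ) • w := by
    rw [Smat, sum_mulVec']
    have h1 : ∀ k, (∑ l, ((c k l : ℝ) : ℂ) • (proj (u k) ⊗ₖ proj (v l))) *ᵥ w
        = if k = i then ((c k j : ℝ) : ℂ) • w else 0 := by
      intro k
      rw [sum_mulVec']
      have h2 : ∀ l, (((c k l : ℝ) : ℂ) • (proj (u k) ⊗ₖ proj (v l))) *ᵥ w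
          = ((c k l : ℝ) : ℂ) •
              (if k = i then (if l = j then w else 0) else 0) := by
        intro l
        rw [Matrix.smul_mulVec, kron_proj, proj_mulVec, hip k l]
        congr 1
        by_cases h1 : k = i <;> by_cases h2 : l = j <;>
          simp [h1, h2, hw]
      rw [Finset.sum_congr rfl fun l _ => h2 l]
      by_cases h1 : k = i
      · simp only [if_pos h1, smul_ite, smul_zero, Finset.sum_ite_eq', Finset.mem_univ, if_true]
      · simp [h1]
    rw [Finset.sum_congr rfl fun k _ => h1 k]
    simp [Finset.sum_ite_eq']
  have hq := h.dotProduct_mulVec_nonneg w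
  rw [hmv, dotProduct_smul] at hq
  have hww : dotProduct (star w) w = 1 := by
    have := hip i j
    simpa using this
  rw [smul_eq_mul, hww, mul_one] at hq
  exact_mod_cast hq

end Smat

end Aux

/-- The nonlinear map `P_x`, given by `(I⊗P_x)ρ = (I⊗Γ_{1/x})(I⊗Γ_x)ρ`, leaves every state
with a product eigenbasis invariant. -/
theorem Px_of_productEigenbasis {dA dB : ℕ} (x : ℝ) (hx1 : x ≠ 1) (hx0 : x ≠ 0)
    (ρ : Matrix ((Fin dA) × (Fin dB)) ((Fin dA) × (Fin dB)) ℂ)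
    (hρ : ρ.PosSemidef) (hρ1 : ρ.trace = 1)
    (hPE : HasProductEigenbasis ρ) :
    Gamma (1 / x) (Gamma x ρ) = ρ := by
  obtain ⟨u, v, c, hu, hv, hρeq⟩ := hPE
  have hρS : ρ = Smat u v c := hρeq
  have hρPSD : (Smat u v c).PosSemidef := hρS ▸ hρ
  have hc : ∀ i j, 0 ≤ c i j := Smat_coeff_nonneg hu hv c hρPSD
  set r : Fin dB → ℝ := fun j => ∑ i, c i j with hrdef
  have hrnn : ∀ j, 0 ≤ r j := fun j => Finset.sum_nonneg fun i _ => hc i j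
  have hczero : ∀ j, r j = 0 → ∀ i, c i j = 0 := fun j hj i =>
    (Finset.sum_eq_zero_iff_of_nonneg (fun i _ => hc i j)).mp hj i (Finset.mem_univ i)
  set w₁ : Fin dA → Fin dB → ℝ :=
    fun i j => c i j * (if r j = 0 then 0 else r j ^ (x - 1)) with hw₁def
  have hw₁nn : ∀ i j, 0 ≤ w₁ i j := by
    intro i j
    refine mul_nonneg (hc i j) ?_
    split
    · exact le_refl 0
    · exact Real.rpow_nonneg (hrnn j) _
  -- Step A : `Gamma x ρ = Smat u v w₁`
  have hptr : ptrA ρ = ∑ j, ((r j : ℝ) : ℂ) • proj (v j) := by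
    rw [hρS, ptrA_Smat hu]
  have hpow1 : matRPow (ptrA ρ) (x - 1)
      = ∑ j, (((if r j = 0 then 0 else r j ^ (x - 1) : ℝ)) : ℂ) • proj (v j) := by
    rw [hptr]
    exact matRPow_sum_proj hv r (x - 1)
  have hM : ρ * ((1 : Matrix (Fin dA) (Fin dA) ℂ) ⊗ₖ matRPow (ptrA ρ) (x - 1))
      = Smat u v w₁ := by
    rw [hpow1, hρS, Smat_mul_kron hv]
  have hGx : Gamma x ρ = Smat u v w₁ := by
    rw [Gamma]
    exact ((Smat_posSemidef w₁ hw₁nn).eq_sqrt_of_sq_eq _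
      (by rw [pow_two, hM, Smat_conjTranspose])).symm
  -- Step B : partial trace and power of `Gamma x ρ`
  set s : Fin dB → ℝ := fun j => if r j = 0 then 0 else r j ^ x with hsdef
  have hsum_w₁ : ∀ j, ∑ i, w₁ i j = s j := by
    intro j
    show ∑ i, c i j * (if r j = 0 then 0 else r j ^ (x - 1))
        = if r j = 0 then 0 else r j ^ x
    rw [← Finset.sum_mul]
    by_cases hj : r j = 0
    · simp [hj]
    · have hpos : 0 < r j := lt_of_le_of_ne (hrnn j) (Ne.symm hj)
      simp only [hj, if_false]
      have h1 : (∑ i, c i j) = r j := rfl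
      have h2 : r j * r j ^ (x - 1) = r j ^ (1 + (x - 1)) := by
        rw [Real.rpow_add hpos, Real.rpow_one]
      rw [h1, h2]
      congr 1
      ring
  have hptr2 : ptrA (Gamma x ρ) = ∑ j, ((s j : ℝ) : ℂ) • proj (v j) := by
    rw [hGx, ptrA_Smat hu]
    exact Finset.sum_congr rfl fun j _ => by rw [hsum_w₁ j]
  have hpow2 : matRPow (ptrA (Gamma x ρ)) (1 / x - 1)
      = ∑ j, (((if s j = 0 then 0 else s j ^ (1 / x - 1) : ℝ)) : ℂ) • proj (v j) := by
    rw [hptr2]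
    exact matRPow_sum_proj hv s (1 / x - 1)
  -- Step C : the final product is `Smat u v c`
  have hM₂ : Gamma x ρ * ((1 : Matrix (Fin dA) (Fin dA) ℂ)
        ⊗ₖ matRPow (ptrA (Gamma x ρ)) (1 / x - 1)) = Smat u v c := by
    rw [hpow2, hGx, Smat_mul_kron hv]
    refine congrArg (Smat u v) (funext fun i => funext fun j => ?_)
    show w₁ i j * (if s j = 0 then 0 else s j ^ (1 / x - 1)) = c i j
    by_cases hj : r j = 0
    · have hcz := hczero j hj i
      show (c i j * (if r j = 0 then 0 else r j ^ (x - 1)))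
          * (if s j = 0 then 0 else s j ^ (1 / x - 1)) = c i j
      simp [hj, hcz]
    · have hpos : 0 < r j := lt_of_le_of_ne (hrnn j) (Ne.symm hj)
      have hsj : s j = r j ^ x := by
        show (if r j = 0 then 0 else r j ^ x) = r j ^ x
        simp [hj]
      have hsne : s j ≠ 0 := by
        rw [hsj]
        exact ne_of_gt (Real.rpow_pos_of_pos hpos x)
      show (c i j * (if r j = 0 then 0 else r j ^ (x - 1)))
          * (if s j = 0 then 0 else s j ^ (1 / x - 1)) = c i j
      rw [if_neg hj, if_neg hsne, hsj, ← Real.rpow_mul (le_of_lt hpos),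
        mul_assoc, ← Real.rpow_add hpos]
      have hexp : (x - 1) + x * (1 / x - 1) = 0 := by
        field_simp
        ring
      rw [hexp, Real.rpow_zero, mul_one]
  rw [Gamma]
  conv_rhs => rw [hρS]
  exact (hρPSD.eq_sqrt_of_sq_eq _
    (by rw [pow_two, hM₂, Smat_conjTranspose])).symm

end
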